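/- arXiv:2012.01970 — 4 statements merged into one kernel-verified Lean document; each statement's English description precedes it below -/
import Mathlib

section
/- For any functions f, g : {0,1}^n → {0,1} and any S ⊆ [n], ⟨f·g, χ_S⟩ = Σ_{T,T' ⊆ [n] : TΔT' ⊆ S ⊆ T∪T'} f̂(T)·ĝ(T') · ((1−2p)/√(p(1−p)))^{|S∩T∩T'|}, where TΔT' is the symmetric difference of T and T'. -/
open Finset Real
open scoped symmDiff

noncomputable section

/-- The real value of a bit. -/
def bval (b : Bool) : ℝ := if b then 1 else 0

/-- The `p`-biased product measure on `{0,1}^n`, as a weight function. -/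
def pw (n : ℕ) (p : ℝ) (x : Fin n → Bool) : ℝ := ∏ i, if x i then p else 1 - p

/-- Expectation with respect to the `p`-biased measure. -/
def expect (n : ℕ) (p : ℝ) (f : (Fin n → Bool) → ℝ) : ℝ := ∑ x, pw n p x * f x

/-- Inner product `⟨f,g⟩ = E[f g]`. -/
def binner (n : ℕ) (p : ℝ) (f g : (Fin n → Bool) → ℝ) : ℝ := expect n p fun x => f x * g x

/-- The `p`-biased character `χ_S`. -/
def chi (n : ℕ) (p : ℝ) (S : Finset (Fin n)) (x : Fin n → Bool) : ℝ :=
  ∏ i ∈ S, (bval (x i) - p) / Real.sqrt (p * (1 - p))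

/-- The Fourier–Walsh coefficient `f̂(S) = ⟨f, χ_S⟩`. -/
def fhat (n : ℕ) (p : ℝ) (f : (Fin n → Bool) → ℝ) (S : Finset (Fin n)) : ℝ :=
  binner n p f (chi n p S)

/-- The discrete derivative `D_i f(x) = f(x^{i→1}) - f(x^{i→0})`. -/
def Dop (n : ℕ) (f : (Fin n → Bool) → ℝ) (i : Fin n) (x : Fin n → Bool) : ℝ :=
  f (Function.update x i true) - f (Function.update x i false)

/-- The influence `I_i(f) = P(f(X) ≠ f(R_i X))` where the `i`-th bit is resampled. -/
def influence (n : ℕ) (p : ℝ) (f : (Fin n → Bool) → ℝ) (i : Fin n) : ℝ :=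
  ∑ x, pw n p x *
    ∑ b : Bool, (if b then p else 1 - p) *
      (if f (Function.update x i b) ≠ f x then 1 else 0)

/-- The transition matrix `Q` of the jump chain of the `p`-biased random walk. -/
def Qmat (n : ℕ) (p : ℝ) (x y : Fin n → Bool) : ℝ :=
  if x = y then (1 / (n : ℝ)) * ∑ i, ((1 - p) * (1 - bval (x i)) + p * bval (x i))
  else if (Finset.univ.filter fun i => x i ≠ y i).card = 1 then
    (1 / (n : ℝ)) * ∑ i ∈ Finset.univ.filter (fun i => x i ≠ y i),
      (p * (1 - bval (x i)) + (1 - p) * bval (x i))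
  else 0

/-- `Q_{∂f}(x,y) = Q(x,y) · 1(f(x) ≠ f(y))`. -/
def Qdel (n : ℕ) (p : ℝ) (f : (Fin n → Bool) → ℝ) (x y : Fin n → Bool) : ℝ :=
  Qmat n p x y * (if f x ≠ f y then 1 else 0)

/-- `π^T M h = Σ_{x,y} π(x) M(x,y) h(y)`. -/
def pTMh (n : ℕ) (p : ℝ) (M : (Fin n → Bool) → (Fin n → Bool) → ℝ)
    (h : (Fin n → Bool) → ℝ) : ℝ :=
  ∑ x, ∑ y, pw n p x * M x y * h y

/-- `Q` as a matrix. -/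
def QM (n : ℕ) (p : ℝ) : Matrix (Fin n → Bool) (Fin n → Bool) ℝ :=
  Matrix.of fun x y => Qmat n p x y

/-- `Q_{∂f}` as a matrix. -/
def QdelM (n : ℕ) (p : ℝ) (f : (Fin n → Bool) → ℝ) :
    Matrix (Fin n → Bool) (Fin n → Bool) ℝ :=
  Matrix.of fun x y => Qdel n p f x y

/-- `π^T M h` for a matrix `M`. -/
def pTM (n : ℕ) (p : ℝ) (M : Matrix (Fin n → Bool) (Fin n → Bool) ℝ)
    (h : (Fin n → Bool) → ℝ) : ℝ :=
  ∑ x, ∑ y, pw n p x * M x y * h y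

end

/-!
Expanding `f` and `g` in the orthonormal basis `χ_T` reduces the claim to the triple correlations
`E[χ_T χ_T' χ_S]`. Under the product measure these factor over the coordinates into moments
`E[φ^k]` of the one-bit character `φ = (x - p) / √(p(1-p))`, where `k ≤ 3` counts the sets among
`T, T', S` containing the coordinate. Since `E φ = 0`, `E φ² = 1` and `E φ³ = (1-2p) / √(p(1-p))`,
the product vanishes as soon as some coordinate lies in exactly one of the sets, and otherwise
collects one factor `E φ³` for each coordinate of `S ∩ T ∩ T'`.
-/

noncomputable section

def bitChar (p : ℝ) (b : Bool) : ℝ := (bval b - p) / √(p * (1 - p))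

def bitWeight (p : ℝ) (b : Bool) : ℝ := if b then p else 1 - p

def bitMoment (p : ℝ) (k : ℕ) : ℝ := ∑ b, bitWeight p b * bitChar p b ^ k

end

def memCount {ι : Type*} [DecidableEq ι] (T T' S : Finset ι) (i : ι) : ℕ :=
  (if i ∈ T then 1 else 0) + (if i ∈ T' then 1 else 0) + (if i ∈ S then 1 else 0)

section BitMoments

variable {p : ℝ}

lemma sqrt_mul_one_sub_ne_zero (hp0 : 0 < p) (hp1 : p < 1) : √(p * (1 - p)) ≠ 0 :=
  (Real.sqrt_pos.mpr (by nlinarith)).ne'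

lemma sq_sqrt_mul_one_sub (hp0 : 0 < p) (hp1 : p < 1) : √(p * (1 - p)) ^ 2 = p * (1 - p) :=
  Real.sq_sqrt (by nlinarith)

lemma bitMoment_zero : bitMoment p 0 = 1 := by
  simp [bitMoment, bitWeight]

lemma bitMoment_one : bitMoment p 1 = 0 := by
  simp only [bitMoment, Fintype.sum_bool, bitWeight, bitChar, bval, pow_one, if_true,
    Bool.false_eq_true, if_false]
  ring

lemma bitMoment_two (hp0 : 0 < p) (hp1 : p < 1) : bitMoment p 2 = 1 := by
  have hs := sqrt_mul_one_sub_ne_zero hp0 hp1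
  simp only [bitMoment, Fintype.sum_bool, bitWeight, bitChar, bval, if_true, Bool.false_eq_true,
    if_false]
  field_simp
  linear_combination -sq_sqrt_mul_one_sub hp0 hp1

lemma bitMoment_three (hp0 : 0 < p) (hp1 : p < 1) :
    bitMoment p 3 = (1 - 2 * p) / √(p * (1 - p)) := by
  have hs := sqrt_mul_one_sub_ne_zero hp0 hp1
  simp only [bitMoment, Fintype.sum_bool, bitWeight, bitChar, bval, if_true, Bool.false_eq_true,
    if_false]
  field_simp
  linear_combination (2 * p - 1) * sq_sqrt_mul_one_sub hp0 hp1

lemma bitChar_mul_bitChar_add_one (hp0 : 0 < p) (hp1 : p < 1) (b b' : Bool) :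
    bitChar p b * bitChar p b' + 1 = if b = b' then (bitWeight p b)⁻¹ else 0 := by
  have hs := sqrt_mul_one_sub_ne_zero hp0 hp1
  have hs2 := sq_sqrt_mul_one_sub hp0 hp1
  have : 1 - p ≠ 0 := by linarith
  cases b <;> cases b' <;>
    simp only [bitChar, bitWeight, bval, if_true, Bool.false_eq_true, Bool.true_eq_false,
      if_false] <;>
    field_simp <;>
    first
      | linear_combination hs2
      | linear_combination -p * hs2
      | linear_combination (p - 1) * hs2

end BitMoments

section Fourier

variable {n : ℕ} {p : ℝ}

lemma chi_eq_prod_pow (S : Finset (Fin n)) (x : Fin n → Bool) :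
    chi n p S x = ∏ i, bitChar p (x i) ^ (if i ∈ S then 1 else 0) := by
  simp only [pow_ite, pow_one, pow_zero, Fintype.prod_ite_mem]
  rfl

lemma expect_prod (h : Fin n → Bool → ℝ) :
    expect n p (fun x => ∏ i, h i (x i)) = ∏ i, ∑ b, bitWeight p b * h i b := by
  rw [Fintype.prod_sum]
  simp only [_root_.expect, pw, ← prod_mul_distrib]
  rfl

lemma expect_sum_mul {ι : Type*} (s : Finset ι) (c : ι → ℝ) (h : ι → (Fin n → Bool) → ℝ) :
    expect n p (fun x => ∑ a ∈ s, c a * h a x) = ∑ a ∈ s, c a * expect n p (h a) := by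
  simp only [_root_.expect, mul_sum]
  rw [sum_comm]
  exact sum_congr rfl fun a _ => sum_congr rfl fun x _ => by ring

lemma sum_chi_mul_chi (hp0 : 0 < p) (hp1 : p < 1) (x y : Fin n → Bool) :
    ∑ T, chi n p T x * chi n p T y = if x = y then (pw n p x)⁻¹ else 0 := by
  have hprod :
      ∑ T, chi n p T x * chi n p T y = ∏ i, (bitChar p (x i) * bitChar p (y i) + 1) := by
    rw [prod_add_one, powerset_univ]
    exact sum_congr rfl fun T _ => prod_mul_distrib.symm
  rw [hprod]
  simp only [bitChar_mul_bitChar_add_one hp0 hp1]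
  split_ifs with hxy
  · subst hxy
    simp only [if_true, pw, prod_inv_distrib]
    rfl
  · obtain ⟨i, hi⟩ := Function.ne_iff.mp hxy
    exact prod_eq_zero (mem_univ i) (if_neg hi)

lemma pw_pos (hp0 : 0 < p) (hp1 : p < 1) (x : Fin n → Bool) : 0 < pw n p x :=
  prod_pos fun i _ => by split_ifs <;> linarith

theorem sum_fhat_mul_chi (hp0 : 0 < p) (hp1 : p < 1) (f : (Fin n → Bool) → ℝ)
    (x : Fin n → Bool) : ∑ T, fhat n p f T * chi n p T x = f x := by
  have hswap : ∑ T, fhat n p f T * chi n p T x =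
      ∑ y, pw n p y * f y * ∑ T, chi n p T y * chi n p T x := by
    simp only [fhat, binner, _root_.expect, sum_mul, mul_sum]
    rw [sum_comm]
    exact sum_congr rfl fun y _ => sum_congr rfl fun T _ => by ring
  simp only [hswap, sum_chi_mul_chi hp0 hp1, mul_ite, mul_zero, sum_ite_eq', mem_univ, if_true]
  field_simp [(pw_pos hp0 hp1 x).ne']

end Fourier

section TripleCorrelation

variable {n : ℕ} {p : ℝ} (T T' S : Finset (Fin n))

lemma chi_mul_chi_mul_chi (x : Fin n → Bool) :
    chi n p T x * chi n p T' x * chi n p S x = ∏ i, bitChar p (x i) ^ memCount T T' S i := by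
  simp only [chi_eq_prod_pow, ← prod_mul_distrib, ← pow_add, memCount]

lemma expect_chi_mul_chi_mul_chi_eq_prod :
    expect n p (fun x => chi n p T x * chi n p T' x * chi n p S x) =
      ∏ i, bitMoment p (memCount T T' S i) := by
  simp only [chi_mul_chi_mul_chi]
  exact expect_prod fun i b => bitChar p b ^ memCount T T' S i

variable {T T' S}

lemma bitMoment_memCount (hp0 : 0 < p) (hp1 : p < 1) (h : T ∆ T' ⊆ S ∧ S ⊆ T ∪ T')
    (i : Fin n) :
    bitMoment p (memCount T T' S i) =
      if i ∈ S ∩ T ∩ T' then (1 - 2 * p) / √(p * (1 - p)) else 1 := by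
  have h₁ := @h.1 i
  have h₂ := @h.2 i
  simp only [mem_symmDiff, mem_union, mem_inter] at h₁ h₂ ⊢
  by_cases hT : i ∈ T <;> by_cases hT' : i ∈ T' <;> by_cases hS : i ∈ S <;>
    simp_all [memCount, bitMoment_zero, bitMoment_two hp0 hp1, bitMoment_three hp0 hp1]

lemma exists_memCount_eq_one (h : ¬(T ∆ T' ⊆ S ∧ S ⊆ T ∪ T')) : ∃ i, memCount T T' S i = 1 := by
  simp only [subset_iff, mem_symmDiff, mem_union, not_and_or, not_forall] at h
  rcases h with ⟨i, hi, hS⟩ | ⟨i, hS, hi⟩ <;> exact ⟨i, by grind [memCount]⟩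

theorem expect_chi_mul_chi_mul_chi (hp0 : 0 < p) (hp1 : p < 1) :
    expect n p (fun x => chi n p T x * chi n p T' x * chi n p S x) =
      if T ∆ T' ⊆ S ∧ S ⊆ T ∪ T' then ((1 - 2 * p) / √(p * (1 - p))) ^ #(S ∩ T ∩ T') else 0 := by
  rw [expect_chi_mul_chi_mul_chi_eq_prod]
  split_ifs with h
  · rw [prod_congr rfl fun i _ => bitMoment_memCount hp0 hp1 h i, Fintype.prod_ite_mem,
      prod_const]
  · obtain ⟨i, hi⟩ := exists_memCount_eq_one h
    exact prod_eq_zero (mem_univ i) (by rw [hi, bitMoment_one])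

end TripleCorrelation

theorem product_fourier_general (n : ℕ) (p : ℝ) (hp0 : 0 < p) (hp1 : p < 1)
    (f g : (Fin n → Bool) → ℝ)
    (S : Finset (Fin n)) :
    binner n p (fun x => f x * g x) (chi n p S) =
      ∑ T : Finset (Fin n), ∑ T' : Finset (Fin n),
        (if T ∆ T' ⊆ S ∧ S ⊆ T ∪ T' then
          fhat n p f T * fhat n p g T' *
            ((1 - 2 * p) / Real.sqrt (p * (1 - p))) ^ (S ∩ T ∩ T').card
        else 0) := by
  have hexpand : ∀ x, f x * g x * chi n p S x = ∑ T, fhat n p f T *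
      ∑ T', fhat n p g T' * (chi n p T x * chi n p T' x * chi n p S x) := by
    intro x
    rw [← sum_fhat_mul_chi hp0 hp1 f x, ← sum_fhat_mul_chi hp0 hp1 g x, sum_mul, sum_mul]
    refine sum_congr rfl fun T _ => ?_
    rw [mul_sum, mul_sum, sum_mul]
    exact sum_congr rfl fun T' _ => by ring
  calc binner n p (fun x => f x * g x) (chi n p S)
      = expect n p (fun x => ∑ T, fhat n p f T *
          ∑ T', fhat n p g T' * (chi n p T x * chi n p T' x * chi n p S x)) := by
        simp only [binner, hexpand]
    _ = ∑ T, fhat n p f T * ∑ T', fhat n p g T' *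
          expect n p (fun x => chi n p T x * chi n p T' x * chi n p S x) := by
        simp only [expect_sum_mul]
    _ = _ := by
        simp only [expect_chi_mul_chi_mul_chi hp0 hp1, mul_sum]
        exact sum_congr rfl fun T _ => sum_congr rfl fun T' _ => by split_ifs <;> ring

theorem product_fourier (n : ℕ) (hn : 1 ≤ n) (p : ℝ) (hp0 : 0 < p) (hp1 : p < 1)
    (f g : (Fin n → Bool) → ℝ)
    (hf : ∀ x, f x = 0 ∨ f x = 1) (hg : ∀ x, g x = 0 ∨ g x = 1)
    (S : Finset (Fin n)) :
    binner n p (fun x => f x * g x) (chi n p S) =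
      ∑ T : Finset (Fin n), ∑ T' : Finset (Fin n),
        (if T ∆ T' ⊆ S ∧ S ⊆ T ∪ T' then
          fhat n p f T * fhat n p g T' *
            ((1 - 2 * p) / Real.sqrt (p * (1 - p))) ^ (S ∩ T ∩ T').card
        else 0) :=
  product_fourier_general n p hp0 hp1 f g S
end

section
/- For any increasing function f : {0,1}^n → {0,1} and any S ⊆ [n], π^T Q_{∂f} χ_S = (1/n) · [ (1−2p)·|S|·f̂(S) + 2√(p(1−p)) · Σ_{i ∈ [n] : i ∉ S} f̂(S ∪ {i}) ]. -/
open Finset Real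
open scoped symmDiff

namespace PTQaux

/-- Flip coordinate `i`. -/
noncomputable def flp (n : ℕ) (x : Fin n → Bool) (i : Fin n) : Fin n → Bool :=
  Function.update x i (!(x i))

lemma flp_apply_self {n : ℕ} (x : Fin n → Bool) (i : Fin n) : flp n x i i = !(x i) := by
  simp [flp]

lemma flp_apply_ne {n : ℕ} (x : Fin n → Bool) {i j : Fin n} (h : j ≠ i) : flp n x i j = x j := by
  simp [flp, Function.update_of_ne h]

lemma flp_flp {n : ℕ} (x : Fin n → Bool) (i : Fin n) : flp n (flp n x i) i = x := by
  funext j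
  by_cases h : j = i
  · subst h; simp [flp]
  · simp [flp, Function.update_of_ne h]

lemma flp_involutive {n : ℕ} (i : Fin n) : Function.Involutive (fun x => flp n x i) :=
  fun x => flp_flp x i

lemma sum_flip {n : ℕ} (i : Fin n) (u : (Fin n → Bool) → ℝ) :
    ∑ x, u x = ∑ x, u (flp n x i) :=
  (Fintype.sum_bijective _ ((flp_involutive i).bijective) (fun x => u (flp n x i)) u
    (fun _ => rfl)).symm

lemma sum_pair {n : ℕ} (i : Fin n) (u v : (Fin n → Bool) → ℝ)
    (h : ∀ x, u x + u (flp n x i) = v x + v (flp n x i)) :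
    ∑ x, u x = ∑ x, v x := by
  have h1 : ∑ x, (u x + u (flp n x i)) = ∑ x, (v x + v (flp n x i)) :=
    Finset.sum_congr rfl fun x _ => h x
  rw [Finset.sum_add_distrib, Finset.sum_add_distrib, ← sum_flip i u, ← sum_flip i v] at h1
  linarith

end PTQaux
namespace PTQaux
open Finset

lemma chi_erase {n : ℕ} (p : ℝ) {S : Finset (Fin n)} {i : Fin n} (hi : i ∈ S)
    (x : Fin n → Bool) :
    chi n p S x = (bval (x i) - p) / Real.sqrt (p * (1 - p)) * chi n p (S.erase i) x := by
  rw [chi, chi, ← Finset.mul_prod_erase S _ hi]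

lemma chi_update_erase {n : ℕ} (p : ℝ) (S : Finset (Fin n)) (i : Fin n) (x : Fin n → Bool)
    (b : Bool) :
    chi n p (S.erase i) (Function.update x i b) = chi n p (S.erase i) x :=
  Finset.prod_congr rfl fun j hj => by
    rw [Function.update_of_ne (Finset.ne_of_mem_erase hj)]

lemma chi_update_not_mem {n : ℕ} (p : ℝ) {S : Finset (Fin n)} {i : Fin n} (hi : i ∉ S)
    (x : Fin n → Bool) (b : Bool) :
    chi n p S (Function.update x i b) = chi n p S x :=
  Finset.prod_congr rfl fun j hj => by
    have : j ≠ i := fun h => hi (h ▸ hj)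
    rw [Function.update_of_ne this]

lemma pw_split {n : ℕ} (p : ℝ) (i : Fin n) (x : Fin n → Bool) :
    pw n p x = (if x i then p else 1 - p) *
      ∏ j ∈ Finset.univ.erase i, (if x j then p else 1 - p) := by
  rw [pw, ← Finset.mul_prod_erase Finset.univ _ (Finset.mem_univ i)]

lemma pw_update {n : ℕ} (p : ℝ) (i : Fin n) (x : Fin n → Bool) (b : Bool) :
    pw n p (Function.update x i b) = (if b then p else 1 - p) *
      ∏ j ∈ Finset.univ.erase i, (if x j then p else 1 - p) := by
  rw [pw_split p i, Function.update_self]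
  congr 1
  exact Finset.prod_congr rfl fun j hj => by
    rw [Function.update_of_ne (Finset.ne_of_mem_erase hj)]

lemma Dop_update {n : ℕ} (f : (Fin n → Bool) → ℝ) (i : Fin n) (x : Fin n → Bool) (b : Bool) :
    Dop n f i (Function.update x i b) = Dop n f i x := by
  simp [Dop, Function.update_idem]

lemma ind_eq {n : ℕ} {f : (Fin n → Bool) → ℝ} (hf : ∀ x, f x = 0 ∨ f x = 1)
    (hmono : ∀ x x' : Fin n → Bool, (∀ i, x i ≤ x' i) → f x ≤ f x')
    (x : Fin n → Bool) (i : Fin n) :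
    (if f x ≠ f (flp n x i) then (1 : ℝ) else 0) = Dop n f i x := by
  cases hxi : x i
  · have e1 : Function.update x i false = x := by rw [← hxi]; exact Function.update_eq_self i x
    have e2 : flp n x i = Function.update x i true := by rw [flp, hxi]; rfl
    have hm : f x ≤ f (Function.update x i true) := by
      refine hmono _ _ fun j => ?_
      by_cases h : j = i
      · subst h; simp
      · rw [Function.update_of_ne h]
    rw [Dop, e1, e2]
    rcases hf x with h1 | h1 <;> rcases hf (Function.update x i true) with h2 | h2 <;>
      rw [h1, h2] at hm ⊢ <;> norm_num <;> linarith
  · have e1 : Function.update x i true = x := by rw [← hxi]; exact Function.update_eq_self i x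
    have e2 : flp n x i = Function.update x i false := by rw [flp, hxi]; rfl
    have hm : f (Function.update x i false) ≤ f x := by
      refine hmono _ _ fun j => ?_
      by_cases h : j = i
      · subst h; simp [hxi]
      · rw [Function.update_of_ne h]
    rw [Dop, e1, e2]
    rcases hf x with h1 | h1 <;> rcases hf (Function.update x i false) with h2 | h2 <;>
      rw [h1, h2] at hm ⊢ <;> norm_num <;> linarith

end PTQaux
namespace PTQaux
open Finset

lemma ne_flp {n : ℕ} (x : Fin n → Bool) (i : Fin n) : x ≠ flp n x i := by
  intro h
  have := congrFun h i
  rw [flp_apply_self] at this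
  cases hxi : x i <;> rw [hxi] at this <;> simp at this

lemma filter_flp {n : ℕ} (x : Fin n → Bool) (i : Fin n) :
    (Finset.univ.filter fun j => x j ≠ flp n x i j) = {i} := by
  ext j
  simp only [Finset.mem_filter, Finset.mem_univ, true_and, Finset.mem_singleton]
  constructor
  · intro h
    by_contra hj
    exact h (flp_apply_ne x hj).symm
  · rintro rfl
    rw [flp_apply_self]
    cases x j <;> simp

lemma Qmat_flp {n : ℕ} (p : ℝ) (x : Fin n → Bool) (i : Fin n) :
    Qmat n p x (flp n x i) = (1 / (n : ℝ)) * (if x i then 1 - p else p) := by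
  rw [Qmat, if_neg (fun h => ne_flp x i h), filter_flp, if_pos (Finset.card_singleton i),
    Finset.sum_singleton]
  cases hxi : x i <;> simp [bval, hxi] <;> ring

lemma flp_inj {n : ℕ} (x : Fin n → Bool) : Function.Injective (flp n x) := by
  intro i j h
  by_contra hij
  have h1 := congrFun h i
  rw [flp_apply_self, flp_apply_ne x hij] at h1
  cases x i <;> simp at h1

lemma Qdel_zero {n : ℕ} (p : ℝ) (f : (Fin n → Bool) → ℝ) (x y : Fin n → Bool)
    (hy : y ∉ Finset.univ.image (flp n x)) : Qdel n p f x y = 0 := by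
  by_cases hxy : x = y
  · subst hxy
    simp [Qdel]
  · rw [Qdel, Qmat, if_neg hxy]
    have hcard : (Finset.univ.filter fun j => x j ≠ y j).card ≠ 1 := by
      intro hc
      obtain ⟨i, hi⟩ := Finset.card_eq_one.mp hc
      apply hy
      refine Finset.mem_image.mpr ⟨i, Finset.mem_univ i, ?_⟩
      funext j
      by_cases hj : j = i
      · subst hj
        have : x j ≠ y j := by
          have : j ∈ Finset.univ.filter fun j => x j ≠ y j := by rw [hi]; exact Finset.mem_singleton_self j
          exact (Finset.mem_filter.mp this).2
        rw [flp_apply_self]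
        revert this; cases x j <;> cases y j <;> simp
      · have : j ∉ Finset.univ.filter fun j => x j ≠ y j := by
          rw [hi]; simp [hj]
        have hxj : ¬ (x j ≠ y j) := fun hh => this (Finset.mem_filter.mpr ⟨Finset.mem_univ j, hh⟩)
        rw [flp_apply_ne x hj]
        exact not_not.mp hxj
    rw [if_neg hcard, zero_mul]

lemma row {n : ℕ} (p : ℝ) (f : (Fin n → Bool) → ℝ) (h : (Fin n → Bool) → ℝ)
    (x : Fin n → Bool) :
    ∑ y, Qdel n p f x y * h y
      = ∑ i, (1 / (n : ℝ)) * ((if x i then 1 - p else p) *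
          ((if f x ≠ f (flp n x i) then (1 : ℝ) else 0) * h (flp n x i))) := by
  rw [← Finset.sum_subset (Finset.subset_univ (Finset.univ.image (flp n x)))
      (fun y _ hy => by rw [Qdel_zero p f x y hy, zero_mul]),
    Finset.sum_image (fun i _ j _ hij => flp_inj x hij)]
  refine Finset.sum_congr rfl fun i _ => ?_
  rw [Qdel, Qmat_flp]
  ring

end PTQaux
namespace PTQaux
open Finset

lemma pw_flp {n : ℕ} (p : ℝ) (i : Fin n) (x : Fin n → Bool) :
    pw n p (flp n x i) = (if x i then 1 - p else p) *
      ∏ j ∈ Finset.univ.erase i, (if x j then p else 1 - p) := by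
  rw [flp, pw_update]
  cases x i <;> simp

lemma chi_erase_flp {n : ℕ} (p : ℝ) (S : Finset (Fin n)) (i : Fin n) (x : Fin n → Bool) :
    chi n p (S.erase i) (flp n x i) = chi n p (S.erase i) x := by
  rw [flp]; exact chi_update_erase p S i x _

lemma Dop_flp {n : ℕ} (f : (Fin n → Bool) → ℝ) (i : Fin n) (x : Fin n → Bool) :
    Dop n f i (flp n x i) = Dop n f i x := by
  rw [flp]; exact Dop_update f i x _

lemma key_mem {n : ℕ} {p : ℝ} {S : Finset (Fin n)} (f : (Fin n → Bool) → ℝ)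
    (hs : Real.sqrt (p * (1 - p)) ≠ 0) {i : Fin n} (hi : i ∈ S) :
    ∑ x, pw n p x * ((if x i then 1 - p else p) * (Dop n f i x * chi n p S (flp n x i)))
      = (1 - 2 * p) * fhat n p f S := by
  have hsum : ∑ x, (1 - 2 * p) * (pw n p x * (f x * chi n p S x))
      = (1 - 2 * p) * fhat n p f S := by
    rw [fhat, binner, _root_.expect, Finset.mul_sum]
  rw [← hsum]
  apply sum_pair i
  intro x
  have hchiS := chi_erase p hi
  rw [flp_flp, Dop_flp, flp_apply_self, hchiS x, hchiS (flp n x i), flp_apply_self,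
    chi_erase_flp, pw_flp, pw_split p i x, Dop]
  cases hxi : x i
  · have hy : flp n x i = Function.update x i true := by rw [flp, hxi]; rfl
    have hfx : f x = f (Function.update x i false) := by
      rw [show Function.update x i false = x by rw [← hxi]; exact Function.update_eq_self i x]
    rw [hy, hfx]
    simp only [bval]
    norm_num
    field_simp
    ring
  · have hy : flp n x i = Function.update x i false := by rw [flp, hxi]; rfl
    have hfx : f x = f (Function.update x i true) := by
      rw [show Function.update x i true = x by rw [← hxi]; exact Function.update_eq_self i x]
    rw [hy, hfx]
    simp only [bval]
    norm_num
    field_simp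
    ring

lemma key_not_mem {n : ℕ} {p : ℝ} {S : Finset (Fin n)} (f : (Fin n → Bool) → ℝ)
    (hs : Real.sqrt (p * (1 - p)) ≠ 0) {i : Fin n} (hi : i ∉ S) :
    ∑ x, pw n p x * ((if x i then 1 - p else p) * (Dop n f i x * chi n p S (flp n x i)))
      = 2 * Real.sqrt (p * (1 - p)) * fhat n p f (insert i S) := by
  have hsum : ∑ x, 2 * Real.sqrt (p * (1 - p)) * (pw n p x * (f x * chi n p (insert i S) x))
      = 2 * Real.sqrt (p * (1 - p)) * fhat n p f (insert i S) := by
    rw [fhat, binner, _root_.expect, Finset.mul_sum]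
  rw [← hsum]
  apply sum_pair i
  intro x
  have hins : ∀ z : Fin n → Bool, chi n p (insert i S) z
      = (bval (z i) - p) / Real.sqrt (p * (1 - p)) * chi n p S z := by
    intro z
    rw [chi_erase p (Finset.mem_insert_self i S) z, Finset.erase_insert hi]
  have hSflp : chi n p S (flp n x i) = chi n p S x := by
    rw [flp]; exact chi_update_not_mem p hi x _
  rw [flp_flp, Dop_flp, flp_apply_self, hins x, hins (flp n x i), flp_apply_self,
    hSflp, pw_flp, pw_split p i x, Dop]
  cases hxi : x i
  · have hy : flp n x i = Function.update x i true := by rw [flp, hxi]; rfl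
    have hfx : f x = f (Function.update x i false) := by
      rw [show Function.update x i false = x by rw [← hxi]; exact Function.update_eq_self i x]
    rw [hy, hfx]
    simp only [bval]
    norm_num
    field_simp
    ring
  · have hy : flp n x i = Function.update x i false := by rw [flp, hxi]; rfl
    have hfx : f x = f (Function.update x i true) := by
      rw [show Function.update x i true = x by rw [← hxi]; exact Function.update_eq_self i x]
    rw [hy, hfx]
    simp only [bval]
    norm_num
    field_simp
    ring

end PTQaux
open PTQaux in
theorem pT_Qdel_chi_increasing (n : ℕ) (hn : 1 ≤ n) (p : ℝ) (hp0 : 0 < p) (hp1 : p < 1)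
    (f : (Fin n → Bool) → ℝ) (hf : ∀ x, f x = 0 ∨ f x = 1)
    (hmono : ∀ x x' : Fin n → Bool, (∀ i, x i ≤ x' i) → f x ≤ f x')
    (S : Finset (Fin n)) :
    pTMh n p (Qdel n p f) (chi n p S) =
      (1 / (n : ℝ)) * ((1 - 2 * p) * S.card * fhat n p f S +
        2 * Real.sqrt (p * (1 - p)) * ∑ i ∈ Sᶜ, fhat n p f (insert i S)) := by
  have hs : Real.sqrt (p * (1 - p)) ≠ 0 :=
    ne_of_gt (Real.sqrt_pos.mpr (by nlinarith))
  have h1 : ∀ x : Fin n → Bool, ∑ y, pw n p x * Qdel n p f x y * chi n p S y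
      = ∑ i, (1 / (n : ℝ)) * (pw n p x * ((if x i then 1 - p else p) *
          (Dop n f i x * chi n p S (flp n x i)))) := by
    intro x
    calc ∑ y, pw n p x * Qdel n p f x y * chi n p S y
        = pw n p x * ∑ y, Qdel n p f x y * chi n p S y := by
          rw [Finset.mul_sum]
          exact Finset.sum_congr rfl fun y _ => by ring
      _ = _ := by
          rw [row p f (chi n p S) x, Finset.mul_sum]
          refine Finset.sum_congr rfl fun i _ => ?_
          rw [ind_eq hf hmono x i]
          ring
  have hS : ∑ i ∈ S, (1 / (n : ℝ)) *
        (∑ x, pw n p x * ((if x i then 1 - p else p) * (Dop n f i x * chi n p S (flp n x i))))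
      = (1 / (n : ℝ)) * ((1 - 2 * p) * S.card * fhat n p f S) := by
    rw [Finset.sum_congr rfl (fun i hi => by rw [key_mem f hs hi]),
      Finset.sum_const, nsmul_eq_mul]
    ring
  have hC : ∑ i ∈ Sᶜ, (1 / (n : ℝ)) *
        (∑ x, pw n p x * ((if x i then 1 - p else p) * (Dop n f i x * chi n p S (flp n x i))))
      = (1 / (n : ℝ)) * (2 * Real.sqrt (p * (1 - p)) * ∑ i ∈ Sᶜ, fhat n p f (insert i S)) := by
    rw [Finset.sum_congr rfl
      (fun i hi => by rw [key_not_mem f hs (Finset.mem_compl.mp hi)]),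
      Finset.mul_sum, Finset.mul_sum]
  calc pTMh n p (Qdel n p f) (chi n p S)
      = ∑ x, ∑ i, (1 / (n : ℝ)) * (pw n p x * ((if x i then 1 - p else p) *
          (Dop n f i x * chi n p S (flp n x i)))) := by
        rw [pTMh]
        exact Finset.sum_congr rfl fun x _ => h1 x
    _ = ∑ i, ∑ x, (1 / (n : ℝ)) * (pw n p x * ((if x i then 1 - p else p) *
          (Dop n f i x * chi n p S (flp n x i)))) := Finset.sum_comm
    _ = ∑ i, (1 / (n : ℝ)) * (∑ x, pw n p x * ((if x i then 1 - p else p) *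
          (Dop n f i x * chi n p S (flp n x i)))) := by
        exact Finset.sum_congr rfl fun i _ => (Finset.mul_sum _ _ _).symm
    _ = _ := by
        rw [← Finset.sum_add_sum_compl S, hS, hC]
        ring
end

section
/- For any function f : {0,1}^n → {0,1} and any integer k ≥ 2, π^T Q_{∂f} (Q − I)^{k−2} Q_{∂f} 1 = (1/n²) · Σ_{S ⊆ [n]} (−|S|/n)^{k−2} · ( n·π^T Q_{∂f} χ_S )², with the convention 0^0 = 1 for the term S = ∅ when k = 2. -/
open Finset Real
open scoped symmDiff

section helpers

variable {n : ℕ} {p : ℝ}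

lemma sum_chi_chi (hp0 : 0 < p) (hp1 : p < 1) (x y : Fin n → Bool) :
    ∑ S : Finset (Fin n), chi n p S x * chi n p S y =
      if x = y then (pw n p x)⁻¹ else 0 := by
  have hp : p ≠ 0 := ne_of_gt hp0
  have hp' : 1 - p ≠ 0 := by linarith
  have hpq : p * (1 - p) ≠ 0 := mul_ne_zero hp hp'
  have hsq : Real.sqrt (p * (1 - p)) * Real.sqrt (p * (1 - p)) = p * (1 - p) :=
    Real.mul_self_sqrt (by nlinarith)
  have step1 : ∀ S : Finset (Fin n), chi n p S x * chi n p S y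
      = ∏ i ∈ S, ((bval (x i) - p) * (bval (y i) - p) / (p * (1 - p))) := by
    intro S
    rw [chi, chi, ← Finset.prod_mul_distrib]
    refine Finset.prod_congr rfl fun i _ => ?_
    rw [div_mul_div_comm, hsq]
  simp only [step1]
  have key : ∏ i : Fin n,
      ((bval (x i) - p) * (bval (y i) - p) / (p * (1 - p)) + 1)
      = ∑ S : Finset (Fin n), ∏ i ∈ S, ((bval (x i) - p) * (bval (y i) - p) / (p * (1 - p))) := by
    rw [Finset.prod_add]
    simp [Finset.powerset_univ]
  rw [← key]
  have hcoord : ∀ i : Fin n,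
      (bval (x i) - p) * (bval (y i) - p) / (p * (1 - p)) + 1
        = if x i = y i then (if x i then p else 1 - p)⁻¹ else 0 := by
    intro i
    cases hx : x i <;> cases hy : y i <;>
      simp only [show bval false = (0:ℝ) from rfl, show bval true = (1:ℝ) from rfl,
        reduceIte, Bool.false_eq_true, Bool.true_eq_false, if_true, if_false]
    · rw [div_add_one hpq, inv_eq_one_div, div_eq_div_iff hpq hp']
      ring
    · rw [div_add_one hpq, div_eq_zero_iff]
      left
      ring
    · rw [div_add_one hpq, div_eq_zero_iff]
      left
      ring
    · rw [div_add_one hpq, inv_eq_one_div, div_eq_div_iff hpq hp]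
      ring
  by_cases hxy : x = y
  · subst hxy
    rw [if_pos rfl]
    have h3 : ∀ i : Fin n, (bval (x i) - p) * (bval (x i) - p) / (p * (1 - p)) + 1
        = (if x i then p else 1 - p)⁻¹ := fun i => by rw [hcoord i, if_pos rfl]
    rw [Finset.prod_congr rfl fun i _ => h3 i, Finset.prod_inv_distrib]
    rfl
  · rw [if_neg hxy]
    obtain ⟨i, hi⟩ : ∃ i, x i ≠ y i := by
      by_contra h
      push_neg at h
      exact hxy (funext h)
    exact Finset.prod_eq_zero (Finset.mem_univ i) (by rw [hcoord i, if_neg hi])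

lemma inversion (hp0 : 0 < p) (hp1 : p < 1) (g : (Fin n → Bool) → ℝ) (x : Fin n → Bool) :
    g x = ∑ S : Finset (Fin n),
      (∑ y, pw n p y * g y * chi n p S y) * chi n p S x := by
  symm
  have h1 : ∀ S : Finset (Fin n), (∑ y, pw n p y * g y * chi n p S y) * chi n p S x
      = ∑ y, pw n p y * g y * (chi n p S y * chi n p S x) := by
    intro S
    rw [Finset.sum_mul]
    exact Finset.sum_congr rfl fun y _ => by ring
  simp only [h1]
  rw [Finset.sum_comm]
  have h2 : ∀ y, ∑ S : Finset (Fin n), pw n p y * g y * (chi n p S y * chi n p S x)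
      = if y = x then g x else 0 := by
    intro y
    rw [← Finset.mul_sum, sum_chi_chi hp0 hp1]
    split
    · rename_i h
      subst h
      have hne := (pw_pos hp0 hp1 y).ne'
      field_simp
    · simp
  simp only [h2]
  simp

lemma filter_update (x : Fin n → Bool) (i : Fin n) :
    (Finset.univ.filter fun j => x j ≠ Function.update x i (!x i) j) = {i} := by
  ext j
  simp only [Finset.mem_filter, Finset.mem_univ, true_and, Finset.mem_singleton]
  constructor
  · intro h
    by_contra hj
    exact h (by rw [Function.update_of_ne hj])
  · intro h
    subst h
    rw [Function.update_self]
    cases x j <;> simp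

lemma update_ne_self (x : Fin n → Bool) (i : Fin n) : Function.update x i (!x i) ≠ x := by
  intro h
  have h2 := congrFun h i
  rw [Function.update_self] at h2
  cases hx : x i <;> rw [hx] at h2 <;> simp at h2

lemma Qmat_update (x : Fin n → Bool) (i : Fin n) :
    Qmat n p x (Function.update x i (!x i)) =
      (1 / (n : ℝ)) * (p * (1 - bval (x i)) + (1 - p) * bval (x i)) := by
  unfold Qmat
  rw [if_neg (Ne.symm (update_ne_self x i)), filter_update]
  simp

lemma Qmat_diag (x : Fin n → Bool) :
    Qmat n p x x = (1 / (n : ℝ)) * ∑ i, ((1 - p) * (1 - bval (x i)) + p * bval (x i)) := by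
  unfold Qmat
  rw [if_pos rfl]

lemma card_one_exists {x y : Fin n → Bool}
    (h : (Finset.univ.filter fun i => x i ≠ y i).card = 1) :
    ∃ i, y = Function.update x i (!x i) := by
  obtain ⟨i, hi⟩ := Finset.card_eq_one.mp h
  refine ⟨i, funext fun j => ?_⟩
  by_cases hj : j = i
  · subst hj
    have hmem : j ∈ Finset.univ.filter fun i => x i ≠ y i := by
      rw [hi]; exact Finset.mem_singleton_self j
    have hne : x j ≠ y j := by simpa using hmem
    rw [Function.update_self]
    cases hxj : x j <;> cases hyj : y j <;> simp_all
  · have hmem : j ∉ Finset.univ.filter fun i => x i ≠ y i := by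
      rw [hi]; simpa using hj
    have heq : x j = y j := by
      by_contra hne
      exact hmem (by simpa using hne)
    rw [Function.update_of_ne hj, ← heq]

lemma update_inj (x : Fin n → Bool) {i j : Fin n}
    (h : Function.update x i (!x i) = Function.update x j (!x j)) : i = j := by
  by_contra hij
  have h2 := congrFun h i
  rw [Function.update_self, Function.update_of_ne hij] at h2
  cases hx : x i <;> rw [hx] at h2 <;> simp at h2

lemma sum_over_neighbors (F : (Fin n → Bool) → ℝ) (x : Fin n → Bool)
    (h0 : ∀ y, y ≠ x → (∀ i, y ≠ Function.update x i (!x i)) → F y = 0) :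
    ∑ y, F y = F x + ∑ i, F (Function.update x i (!x i)) := by
  classical
  set T : Finset (Fin n → Bool) :=
    insert x (Finset.univ.image fun i => Function.update x i (!x i)) with hT
  have hsub : ∑ y ∈ T, F y = ∑ y, F y := by
    apply Finset.sum_subset (Finset.subset_univ T)
    intro y _ hy
    rw [hT] at hy
    simp only [Finset.mem_insert, Finset.mem_image, Finset.mem_univ, true_and] at hy
    push_neg at hy
    exact h0 y hy.1 fun i => fun h => (hy.2 i) h.symm
  rw [← hsub, hT]
  rw [Finset.sum_insert]
  · congr 1
    rw [Finset.sum_image]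
    intro i _ j _ h
    exact update_inj x h
  · simp only [Finset.mem_insert, Finset.mem_image, Finset.mem_univ, true_and]
    push_neg
    intro i
    exact update_ne_self x i

lemma chi_update_notMem {S : Finset (Fin n)} {i : Fin n} (hi : i ∉ S) (x : Fin n → Bool) :
    chi n p S (Function.update x i (!x i)) = chi n p S x := by
  unfold chi
  refine Finset.prod_congr rfl fun j hj => ?_
  rw [Function.update_of_ne (by rintro rfl; exact hi hj)]

lemma QM_eigen (hn : 1 ≤ n) (hp0 : 0 < p) (hp1 : p < 1) (S : Finset (Fin n)) :
    (QM n p).mulVec (chi n p S) = (1 - (S.card : ℝ) / n) • chi n p S := by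
  have hne : (n : ℝ) ≠ 0 := Nat.cast_ne_zero.mpr (by omega)
  funext x
  have unfold1 : (QM n p).mulVec (chi n p S) x = ∑ y, Qmat n p x y * chi n p S y := by
    simp [Matrix.mulVec, dotProduct, QM]
  rw [unfold1]
  have h0 : ∀ y, y ≠ x → (∀ i, y ≠ Function.update x i (!x i)) →
      Qmat n p x y * chi n p S y = 0 := by
    intro y hy1 hy2
    have hq : Qmat n p x y = 0 := by
      unfold Qmat
      rw [if_neg (Ne.symm hy1), if_neg]
      intro h
      obtain ⟨i, hi⟩ := card_one_exists h
      exact hy2 i hi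
    rw [hq, zero_mul]
  rw [sum_over_neighbors _ x h0, Qmat_diag]
  simp only [Qmat_update]
  have key_i : ∀ i : Fin n,
      ((1 - p) * (1 - bval (x i)) + p * bval (x i)) * chi n p S x
        + (p * (1 - bval (x i)) + (1 - p) * bval (x i)) * chi n p S (Function.update x i (!x i))
      = if i ∈ S then 0 else chi n p S x := by
    intro i
    by_cases hi : i ∈ S
    · rw [if_pos hi]
      have e1 : chi n p S x = (bval (x i) - p) / Real.sqrt (p * (1 - p)) *
          ∏ j ∈ S.erase i, (bval (x j) - p) / Real.sqrt (p * (1 - p)) :=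
        (Finset.mul_prod_erase S _ hi).symm
      have e2 : chi n p S (Function.update x i (!x i))
          = (bval (!x i) - p) / Real.sqrt (p * (1 - p)) *
            ∏ j ∈ S.erase i, (bval (x j) - p) / Real.sqrt (p * (1 - p)) := by
        rw [show chi n p S (Function.update x i (!x i))
            = (bval (Function.update x i (!x i) i) - p) / Real.sqrt (p * (1 - p)) *
              ∏ j ∈ S.erase i, (bval (Function.update x i (!x i) j) - p)
                / Real.sqrt (p * (1 - p)) from (Finset.mul_prod_erase S _ hi).symm]
        rw [Function.update_self]
        congr 1
        refine Finset.prod_congr rfl fun j hj => ?_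
        rw [Function.update_of_ne (Finset.ne_of_mem_erase hj)]
      rw [e1, e2]
      cases hx : x i <;> simp [bval] <;> ring
    · rw [if_neg hi, chi_update_notMem hi]
      cases hx : x i <;> simp [bval, hx] <;> ring
  have hsum : ∑ i, (((1 - p) * (1 - bval (x i)) + p * bval (x i)) * chi n p S x
        + (p * (1 - bval (x i)) + (1 - p) * bval (x i))
          * chi n p S (Function.update x i (!x i)))
      = ((n : ℝ) - S.card) * chi n p S x := by
    rw [Finset.sum_congr rfl fun i _ => key_i i, Finset.sum_ite, Finset.sum_const,
      Finset.sum_const]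
    have hcard : (Finset.univ.filter fun i => i ∉ S).card = n - S.card := by
      simp [Finset.filter_not, Finset.card_sdiff_of_subset (Finset.subset_univ S),
        Finset.filter_mem_eq_inter]
    rw [hcard]
    have hle : S.card ≤ n := by simpa using Finset.card_le_univ S
    simp [Nat.cast_sub hle, smul_eq_mul]
  calc 1 / (n : ℝ) * (∑ i, ((1 - p) * (1 - bval (x i)) + p * bval (x i))) * chi n p S x
        + ∑ i, 1 / (n : ℝ) * (p * (1 - bval (x i)) + (1 - p) * bval (x i))
            * chi n p S (Function.update x i (!x i))
      = ∑ i, 1 / (n : ℝ) * (((1 - p) * (1 - bval (x i)) + p * bval (x i)) * chi n p S x)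
        + ∑ i, 1 / (n : ℝ) * ((p * (1 - bval (x i)) + (1 - p) * bval (x i))
            * chi n p S (Function.update x i (!x i))) := by
        rw [mul_assoc, Finset.sum_mul, Finset.mul_sum]
        congr 1
        exact Finset.sum_congr rfl fun i _ => mul_assoc _ _ _
    _ = ∑ i, 1 / (n : ℝ) * (((1 - p) * (1 - bval (x i)) + p * bval (x i)) * chi n p S x
          + (p * (1 - bval (x i)) + (1 - p) * bval (x i))
            * chi n p S (Function.update x i (!x i))) := by
        rw [← Finset.sum_add_distrib]
        exact Finset.sum_congr rfl fun i _ => (mul_add _ _ _).symm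
    _ = 1 / (n : ℝ) * ∑ i, (((1 - p) * (1 - bval (x i)) + p * bval (x i)) * chi n p S x
          + (p * (1 - bval (x i)) + (1 - p) * bval (x i))
            * chi n p S (Function.update x i (!x i))) := (Finset.mul_sum _ _ _).symm
    _ = 1 / (n : ℝ) * (((n : ℝ) - S.card) * chi n p S x) := by rw [hsum]
    _ = ((1 - (S.card : ℝ) / n) • chi n p S) x := by
        simp only [Pi.smul_apply, smul_eq_mul]
        field_simp
        try ring

lemma QM_sub_pow_eigen (hn : 1 ≤ n) (hp0 : 0 < p) (hp1 : p < 1) (S : Finset (Fin n)) (m : ℕ) :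
    ((QM n p - 1) ^ m).mulVec (chi n p S) = ((-(S.card : ℝ) / n) ^ m) • chi n p S := by
  induction m with
  | zero => simp [Matrix.one_mulVec]
  | succ m ih =>
    rw [pow_succ, ← Matrix.mulVec_mulVec]
    have h1 : (QM n p - 1).mulVec (chi n p S) = (-(S.card : ℝ) / n) • chi n p S := by
      rw [Matrix.sub_mulVec, QM_eigen hn hp0 hp1 S, Matrix.one_mulVec]
      funext x
      simp only [Pi.sub_apply, Pi.smul_apply, smul_eq_mul]
      ring
    rw [h1, Matrix.mulVec_smul, ih, smul_smul]
    congr 1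
    rw [pow_succ]
    ring

lemma pw_Qmat_comm (hn : 1 ≤ n) (hp0 : 0 < p) (hp1 : p < 1) (x y : Fin n → Bool) :
    pw n p x * Qmat n p x y = pw n p y * Qmat n p y x := by
  by_cases hxy : x = y
  · subst hxy; rfl
  by_cases hcard : (Finset.univ.filter fun i => x i ≠ y i).card = 1
  · obtain ⟨i, hyeq⟩ := card_one_exists hcard
    have hyi : y i = !x i := by rw [hyeq]; exact Function.update_self i (!x i) x
    have hyx : x = Function.update y i (!(y i)) := by
      funext j
      by_cases hj : j = i
      · subst hj
        rw [Function.update_self, hyi, Bool.not_not]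
      · rw [Function.update_of_ne hj, hyeq, Function.update_of_ne hj]
    have hq1 : Qmat n p x y = (1 / (n : ℝ)) * (p * (1 - bval (x i)) + (1 - p) * bval (x i)) := by
      rw [hyeq]; exact Qmat_update x i
    have hq2 : Qmat n p y x = (1 / (n : ℝ)) * (p * (1 - bval (y i)) + (1 - p) * bval (y i)) := by
      conv_lhs => rw [hyx]
      exact Qmat_update y i
    have e1 : pw n p x = (if x i then p else 1 - p) *
        ∏ j ∈ Finset.univ.erase i, (if x j then p else 1 - p) := by
      unfold pw
      exact (Finset.mul_prod_erase _ _ (Finset.mem_univ i)).symm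
    have e2 : pw n p y = (if y i then p else 1 - p) *
        ∏ j ∈ Finset.univ.erase i, (if x j then p else 1 - p) := by
      unfold pw
      rw [← Finset.mul_prod_erase _ _ (Finset.mem_univ i)]
      congr 1
      refine Finset.prod_congr rfl fun j hj => ?_
      rw [hyeq, Function.update_of_ne (Finset.ne_of_mem_erase hj)]
    rw [hq1, hq2, e1, e2, hyi]
    cases hx : x i <;> simp [bval, hx] <;> ring
  · have hfilter : (Finset.univ.filter fun i => y i ≠ x i)
        = (Finset.univ.filter fun i => x i ≠ y i) := by
      ext j; simp [ne_comm]
    have h1 : Qmat n p x y = 0 := by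
      unfold Qmat
      rw [if_neg hxy, if_neg hcard]
    have h2 : Qmat n p y x = 0 := by
      unfold Qmat
      rw [if_neg (Ne.symm hxy), if_neg (by rw [hfilter]; exact hcard)]
    rw [h1, h2, mul_zero, mul_zero]

lemma pw_Qdel_comm (hn : 1 ≤ n) (hp0 : 0 < p) (hp1 : p < 1) (f : (Fin n → Bool) → ℝ)
    (x y : Fin n → Bool) :
    pw n p x * Qdel n p f x y = pw n p y * Qdel n p f y x := by
  unfold Qdel
  have h := pw_Qmat_comm hn hp0 hp1 x y
  have hind : (if f x ≠ f y then (1:ℝ) else 0) = (if f y ≠ f x then (1:ℝ) else 0) := by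
    simp [ne_comm]
  rw [← mul_assoc, ← mul_assoc, h, hind]

lemma rev_sum (hn : 1 ≤ n) (hp0 : 0 < p) (hp1 : p < 1) (f : (Fin n → Bool) → ℝ)
    (h : (Fin n → Bool) → ℝ) :
    ∑ x, pw n p x * (QdelM n p f).mulVec h x
      = ∑ y, pw n p y * ((QdelM n p f).mulVec fun _ => 1) y * h y := by
  have happ : ∀ (g : (Fin n → Bool) → ℝ) (x), (QdelM n p f).mulVec g x
      = ∑ y, Qdel n p f x y * g y := by
    intro g x
    simp [Matrix.mulVec, dotProduct, QdelM]
  have lhs : ∑ x, pw n p x * (QdelM n p f).mulVec h x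
      = ∑ x, ∑ y, (pw n p x * Qdel n p f x y) * h y := by
    refine Finset.sum_congr rfl fun x _ => ?_
    rw [happ, Finset.mul_sum]
    exact Finset.sum_congr rfl fun y _ => by ring
  have rhs : ∑ y, pw n p y * ((QdelM n p f).mulVec fun _ => 1) y * h y
      = ∑ y, ∑ x, (pw n p y * Qdel n p f y x) * h y := by
    refine Finset.sum_congr rfl fun y _ => ?_
    rw [happ, Finset.mul_sum, Finset.sum_mul]
    exact Finset.sum_congr rfl fun x _ => by ring
  rw [lhs, rhs, Finset.sum_comm]
  refine Finset.sum_congr rfl fun y _ => Finset.sum_congr rfl fun x _ => ?_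
  rw [pw_Qdel_comm hn hp0 hp1 f x y]

lemma pTM_eq (M : Matrix (Fin n → Bool) (Fin n → Bool) ℝ) (h : (Fin n → Bool) → ℝ) :
    pTM n p M h = ∑ x, pw n p x * M.mulVec h x := by
  unfold pTM
  simp only [Matrix.mulVec, dotProduct, Finset.mul_sum, mul_assoc]

end helpers

theorem pT_Qdel_power (n : ℕ) (hn : 1 ≤ n) (p : ℝ) (hp0 : 0 < p) (hp1 : p < 1)
    (f : (Fin n → Bool) → ℝ) (hf : ∀ x, f x = 0 ∨ f x = 1) (k : ℕ) (hk : 2 ≤ k) :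
    pTM n p (QdelM n p f * (QM n p - 1) ^ (k - 2) * QdelM n p f) (fun _ => 1) =
      (1 / (n : ℝ) ^ 2) * ∑ S : Finset (Fin n),
        (-(S.card : ℝ) / n) ^ (k - 2) *
          ((n : ℝ) * pTM n p (QdelM n p f) (chi n p S)) ^ 2 := by
  have hne : (n : ℝ) ≠ 0 := Nat.cast_ne_zero.mpr (by omega)
  have hc2 : ∀ S : Finset (Fin n),
      ∑ y, pw n p y * ((QdelM n p f).mulVec fun _ => 1) y * chi n p S y
        = pTM n p (QdelM n p f) (chi n p S) := by
    intro S
    rw [pTM_eq (QdelM n p f) (chi n p S), rev_sum hn hp0 hp1 f (chi n p S)]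
  have hv2 : ∀ z, ((QdelM n p f).mulVec fun _ => 1) z
      = ∑ S : Finset (Fin n), pTM n p (QdelM n p f) (chi n p S) * chi n p S z := by
    intro z
    rw [inversion hp0 hp1 ((QdelM n p f).mulVec fun _ => 1) z]
    exact Finset.sum_congr rfl fun S _ => by rw [hc2 S]
  have hNv : ∀ y, ((QM n p - 1) ^ (k - 2)).mulVec ((QdelM n p f).mulVec fun _ => 1) y
      = ∑ S : Finset (Fin n), (-(S.card : ℝ) / n) ^ (k - 2) *
          pTM n p (QdelM n p f) (chi n p S) * chi n p S y := by
    intro y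
    have hNapp : ((QM n p - 1) ^ (k - 2)).mulVec ((QdelM n p f).mulVec fun _ => 1) y
        = ∑ z, ((QM n p - 1) ^ (k - 2)) y z * ((QdelM n p f).mulVec fun _ => 1) z := rfl
    rw [hNapp]
    calc ∑ z, ((QM n p - 1) ^ (k - 2)) y z * ((QdelM n p f).mulVec fun _ => 1) z
        = ∑ z, ∑ S : Finset (Fin n), ((QM n p - 1) ^ (k - 2)) y z *
            (pTM n p (QdelM n p f) (chi n p S) * chi n p S z) := by
          refine Finset.sum_congr rfl fun z _ => ?_
          rw [hv2 z, Finset.mul_sum]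
      _ = ∑ S : Finset (Fin n), ∑ z, ((QM n p - 1) ^ (k - 2)) y z *
            (pTM n p (QdelM n p f) (chi n p S) * chi n p S z) := Finset.sum_comm
      _ = ∑ S : Finset (Fin n), pTM n p (QdelM n p f) (chi n p S) *
            ∑ z, ((QM n p - 1) ^ (k - 2)) y z * chi n p S z := by
          refine Finset.sum_congr rfl fun S _ => ?_
          rw [Finset.mul_sum]
          exact Finset.sum_congr rfl fun z _ => by ring
      _ = ∑ S : Finset (Fin n), (-(S.card : ℝ) / n) ^ (k - 2) *
            pTM n p (QdelM n p f) (chi n p S) * chi n p S y := by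
          refine Finset.sum_congr rfl fun S _ => ?_
          have heig := congrFun (QM_sub_pow_eigen hn hp0 hp1 S (k - 2)) y
          rw [show ∑ z, ((QM n p - 1) ^ (k - 2)) y z * chi n p S z
              = ((QM n p - 1) ^ (k - 2)).mulVec (chi n p S) y from rfl, heig]
          simp only [Pi.smul_apply, smul_eq_mul]
          ring
  rw [pTM_eq]
  have hassoc : (QdelM n p f * (QM n p - 1) ^ (k - 2) * QdelM n p f).mulVec (fun _ => 1)
      = (QdelM n p f).mulVec (((QM n p - 1) ^ (k - 2)).mulVec
          ((QdelM n p f).mulVec fun _ => 1)) := by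
    rw [Matrix.mulVec_mulVec, Matrix.mulVec_mulVec]
  rw [hassoc, rev_sum hn hp0 hp1 f
    (((QM n p - 1) ^ (k - 2)).mulVec ((QdelM n p f).mulVec fun _ => 1))]
  have main : ∑ y, pw n p y * ((QdelM n p f).mulVec fun _ => 1) y *
        ((QM n p - 1) ^ (k - 2)).mulVec ((QdelM n p f).mulVec fun _ => 1) y
      = ∑ S : Finset (Fin n), (-(S.card : ℝ) / n) ^ (k - 2) *
          pTM n p (QdelM n p f) (chi n p S) ^ 2 := by
    calc ∑ y, pw n p y * ((QdelM n p f).mulVec fun _ => 1) y *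
          ((QM n p - 1) ^ (k - 2)).mulVec ((QdelM n p f).mulVec fun _ => 1) y
        = ∑ y, ∑ S : Finset (Fin n), (-(S.card : ℝ) / n) ^ (k - 2) *
            pTM n p (QdelM n p f) (chi n p S) *
            (pw n p y * ((QdelM n p f).mulVec fun _ => 1) y * chi n p S y) := by
          refine Finset.sum_congr rfl fun y _ => ?_
          rw [hNv y, Finset.mul_sum]
          exact Finset.sum_congr rfl fun S _ => by ring
      _ = ∑ S : Finset (Fin n), ∑ y, (-(S.card : ℝ) / n) ^ (k - 2) *
            pTM n p (QdelM n p f) (chi n p S) *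
            (pw n p y * ((QdelM n p f).mulVec fun _ => 1) y * chi n p S y) :=
          Finset.sum_comm
      _ = ∑ S : Finset (Fin n), (-(S.card : ℝ) / n) ^ (k - 2) *
            pTM n p (QdelM n p f) (chi n p S) ^ 2 := by
          refine Finset.sum_congr rfl fun S _ => ?_
          rw [← Finset.mul_sum, hc2 S]
          ring
  rw [main, Finset.mul_sum]
  refine Finset.sum_congr rfl fun S _ => ?_
  field_simp
end

section
/- For every function f : {0,1}^n → {0,1}, Σ_{S ⊆ [n], S ≠ ∅} ( (e^{−|S|} − (1 − |S|)) / |S|² ) · [ (1−2p)·|S|·f̂(S) + 2√(p(1−p)) · Σ_{i ∈ [n] : i ∉ S} f̂(S ∪ {i}) ]² ≤ 2·(1−2p)²·Σ_{S ⊆ [n], S ≠ ∅} |S|·f̂(S)² + 16·p(1−p)·n·Σ_{S ⊆ [n], S ≠ ∅} f̂(S)². -/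
open Finset Real
open scoped symmDiff

section Aux

private lemma key_reindex (n : ℕ) (F : Finset (Fin n) → ℝ) :
    ∑ S ∈ Finset.univ.filter (fun S : Finset (Fin n) => S ≠ ∅),
      (((n : ℝ) - S.card) / S.card) * ∑ i ∈ Sᶜ, F (insert i S) ^ 2
    = ∑ T ∈ Finset.univ.filter (fun T : Finset (Fin n) => 2 ≤ T.card),
      ∑ _j ∈ T, (((n : ℝ) - ((T.card : ℝ) - 1)) / ((T.card : ℝ) - 1)) * F T ^ 2 := by
  simp_rw [Finset.mul_sum]
  rw [Finset.sum_sigma', Finset.sum_sigma']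
  refine Finset.sum_nbij' (fun x => ⟨insert x.2 x.1, x.2⟩) (fun x => ⟨x.1.erase x.2, x.2⟩)
    ?_ ?_ ?_ ?_ ?_
  · rintro ⟨S, i⟩ hx
    simp only [Finset.mem_sigma, Finset.mem_filter, Finset.mem_univ, true_and,
      Finset.mem_compl] at hx ⊢
    obtain ⟨hS, hi⟩ := hx
    refine ⟨?_, Finset.mem_insert_self _ _⟩
    rw [Finset.card_insert_of_notMem hi]
    have := Finset.card_pos.mpr (Finset.nonempty_iff_ne_empty.mpr hS)
    omega
  · rintro ⟨T, j⟩ hx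
    simp only [Finset.mem_sigma, Finset.mem_filter, Finset.mem_univ, true_and,
      Finset.mem_compl] at hx ⊢
    obtain ⟨hT, hj⟩ := hx
    refine ⟨?_, Finset.notMem_erase _ _⟩
    have := Finset.card_erase_of_mem hj
    intro h
    rw [h] at this
    simp at this
    omega
  · rintro ⟨S, i⟩ hx
    simp only [Finset.mem_sigma, Finset.mem_filter, Finset.mem_univ, true_and,
      Finset.mem_compl] at hx
    simp [Finset.erase_insert hx.2]
  · rintro ⟨T, j⟩ hx
    simp only [Finset.mem_sigma, Finset.mem_filter, Finset.mem_univ, true_and] at hx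
    simp [Finset.insert_erase hx.2]
  · rintro ⟨S, i⟩ hx
    simp only [Finset.mem_sigma, Finset.mem_filter, Finset.mem_univ, true_and,
      Finset.mem_compl] at hx
    rw [Finset.card_insert_of_notMem hx.2]
    push_cast
    ring_nf

private lemma key_Tbound (n : ℕ) (F : Finset (Fin n) → ℝ) :
    ∑ T ∈ Finset.univ.filter (fun T : Finset (Fin n) => 2 ≤ T.card),
      ∑ _j ∈ T, (((n : ℝ) - ((T.card : ℝ) - 1)) / ((T.card : ℝ) - 1)) * F T ^ 2
    ≤ 2 * n * ∑ T ∈ Finset.univ.filter (fun T : Finset (Fin n) => T ≠ ∅), F T ^ 2 := by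
  rw [Finset.mul_sum]
  calc ∑ T ∈ Finset.univ.filter (fun T : Finset (Fin n) => 2 ≤ T.card),
      ∑ _j ∈ T, (((n : ℝ) - ((T.card : ℝ) - 1)) / ((T.card : ℝ) - 1)) * F T ^ 2
      ≤ ∑ T ∈ Finset.univ.filter (fun T : Finset (Fin n) => 2 ≤ T.card), 2 * n * F T ^ 2 := by
        apply Finset.sum_le_sum
        intro T hT
        simp only [Finset.mem_filter] at hT
        rw [Finset.sum_const, nsmul_eq_mul]
        have hc2 : (2 : ℝ) ≤ T.card := by exact_mod_cast hT.2
        have hcn : (T.card : ℝ) ≤ n := by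
          exact_mod_cast (Finset.card_le_univ T).trans_eq (by simp)
        have h1 : (0 : ℝ) < (T.card : ℝ) - 1 := by linarith
        have hdiv : ((n : ℝ) - ((T.card : ℝ) - 1)) / ((T.card : ℝ) - 1) ≤
            2 * n / (T.card : ℝ) := by
          rw [div_le_div_iff₀ h1 (by linarith)]
          nlinarith
        have hkey : (T.card : ℝ) * (((n : ℝ) - ((T.card : ℝ) - 1)) / ((T.card : ℝ) - 1)) ≤
            2 * n := by
          calc (T.card : ℝ) * (((n : ℝ) - ((T.card : ℝ) - 1)) / ((T.card : ℝ) - 1))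
              ≤ (T.card : ℝ) * (2 * n / (T.card : ℝ)) := by
                apply mul_le_mul_of_nonneg_left hdiv (by positivity)
            _ = 2 * n := by field_simp
        nlinarith [sq_nonneg (F T), hkey]
    _ ≤ ∑ T ∈ Finset.univ.filter (fun T : Finset (Fin n) => T ≠ ∅), 2 * n * F T ^ 2 := by
        apply Finset.sum_le_sum_of_subset_of_nonneg
        · intro T hT
          simp only [Finset.mem_filter, Finset.mem_univ, true_and] at hT ⊢
          intro h; rw [h] at hT; simp at hT
        · intro T _ _; positivity

private lemma key_termwise (n : ℕ) (p : ℝ) (hp0 : 0 < p) (hp1 : p < 1)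
    (F : Finset (Fin n) → ℝ) (S : Finset (Fin n)) (hS : S ≠ ∅) :
    ((Real.exp (-(S.card : ℝ)) - (1 - (S.card : ℝ))) / (S.card : ℝ) ^ 2) *
      ((1 - 2 * p) * S.card * F S +
        2 * Real.sqrt (p * (1 - p)) * ∑ i ∈ Sᶜ, F (insert i S)) ^ 2 ≤
    2 * (1 - 2 * p) ^ 2 * (S.card : ℝ) * F S ^ 2 +
      8 * (p * (1 - p)) * ((((n : ℝ) - S.card) / S.card) * ∑ i ∈ Sᶜ, F (insert i S) ^ 2) := by
  set k : ℝ := (S.card : ℝ) with hk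
  have hk1 : (1 : ℝ) ≤ k := by
    have h := Finset.card_pos.mpr (Finset.nonempty_iff_ne_empty.mpr hS)
    have : (1 : ℕ) ≤ S.card := h
    rw [hk]
    exact_mod_cast this
  have hk0 : (0 : ℝ) < k := by linarith
  have hpq : (0 : ℝ) < p * (1 - p) := mul_pos hp0 (by linarith)
  set a : ℝ := (1 - 2 * p) * k * F S
  set b : ℝ := 2 * Real.sqrt (p * (1 - p)) * ∑ i ∈ Sᶜ, F (insert i S) with hb
  set c : ℝ := (Real.exp (-k) - (1 - k)) / k ^ 2 with hc
  have hc0 : 0 ≤ c := by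
    have := Real.add_one_le_exp (-k)
    apply div_nonneg (by linarith) (by positivity)
  have hcle : c ≤ 1 / k := by
    rw [hc, div_le_div_iff₀ (by positivity) hk0]
    have h1 : Real.exp (-k) ≤ 1 := Real.exp_le_one_iff.mpr (by linarith)
    nlinarith
  have hcs : (∑ i ∈ Sᶜ, F (insert i S)) ^ 2 ≤ (n - k) * ∑ i ∈ Sᶜ, F (insert i S) ^ 2 := by
    have h := sq_sum_le_card_mul_sum_sq (s := Sᶜ) (f := fun i => F (insert i S))
    have hcard : ((Sᶜ.card : ℕ) : ℝ) = n - k := by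
      rw [Finset.card_compl]
      have hle : S.card ≤ Fintype.card (Fin n) := Finset.card_le_univ S
      push_cast [Nat.cast_sub hle]
      simp [hk]
    calc (∑ i ∈ Sᶜ, F (insert i S)) ^ 2 ≤ (Sᶜ.card : ℝ) * ∑ i ∈ Sᶜ, F (insert i S) ^ 2 := by
          exact_mod_cast h
      _ = (n - k) * ∑ i ∈ Sᶜ, F (insert i S) ^ 2 := by rw [hcard]
  have hb2 : b ^ 2 ≤ 4 * (p * (1 - p)) * ((n - k) * ∑ i ∈ Sᶜ, F (insert i S) ^ 2) := by
    rw [hb, mul_pow, mul_pow]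
    rw [Real.sq_sqrt hpq.le]
    nlinarith [hcs]
  have hab : (a + b) ^ 2 ≤ 2 * a ^ 2 + 2 * b ^ 2 := by nlinarith [sq_nonneg (a - b)]
  calc c * (a + b) ^ 2 ≤ (1 / k) * (2 * a ^ 2 + 2 * b ^ 2) := by
        apply mul_le_mul hcle hab (sq_nonneg _) (by positivity)
    _ ≤ (1 / k) * (2 * ((1 - 2 * p) ^ 2 * k ^ 2 * F S ^ 2) +
          2 * (4 * (p * (1 - p)) * ((n - k) * ∑ i ∈ Sᶜ, F (insert i S) ^ 2))) := by
        apply mul_le_mul_of_nonneg_left _ (by positivity)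
        have ha : a ^ 2 = (1 - 2 * p) ^ 2 * k ^ 2 * F S ^ 2 := by ring
        nlinarith [hb2]
    _ = 2 * (1 - 2 * p) ^ 2 * k * F S ^ 2 +
          8 * (p * (1 - p)) * ((((n : ℝ) - k) / k) * ∑ i ∈ Sᶜ, F (insert i S) ^ 2) := by
        field_simp
        ring

end Aux

theorem key_inequality (n : ℕ) (hn : 1 ≤ n) (p : ℝ) (hp0 : 0 < p) (hp1 : p < 1)
    (f : (Fin n → Bool) → ℝ) (hf : ∀ x, f x = 0 ∨ f x = 1) :
    ∑ S ∈ Finset.univ.filter (fun S : Finset (Fin n) => S ≠ ∅),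
      ((Real.exp (-(S.card : ℝ)) - (1 - (S.card : ℝ))) / (S.card : ℝ) ^ 2) *
        ((1 - 2 * p) * S.card * fhat n p f S +
          2 * Real.sqrt (p * (1 - p)) * ∑ i ∈ Sᶜ, fhat n p f (insert i S)) ^ 2 ≤
      2 * (1 - 2 * p) ^ 2 * (∑ S ∈ Finset.univ.filter (fun S : Finset (Fin n) => S ≠ ∅),
        (S.card : ℝ) * fhat n p f S ^ 2) +
      16 * p * (1 - p) * n * ∑ S ∈ Finset.univ.filter (fun S : Finset (Fin n) => S ≠ ∅),
        fhat n p f S ^ 2 := by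
  set F : Finset (Fin n) → ℝ := fhat n p f with hFdef
  have hpq : (0 : ℝ) < p * (1 - p) := mul_pos hp0 (by linarith)
  have step1 : ∑ S ∈ Finset.univ.filter (fun S : Finset (Fin n) => S ≠ ∅),
      ((Real.exp (-(S.card : ℝ)) - (1 - (S.card : ℝ))) / (S.card : ℝ) ^ 2) *
        ((1 - 2 * p) * S.card * F S +
          2 * Real.sqrt (p * (1 - p)) * ∑ i ∈ Sᶜ, F (insert i S)) ^ 2 ≤
      ∑ S ∈ Finset.univ.filter (fun S : Finset (Fin n) => S ≠ ∅),
        (2 * (1 - 2 * p) ^ 2 * (S.card : ℝ) * F S ^ 2 +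
          8 * (p * (1 - p)) * ((((n : ℝ) - S.card) / S.card) *
            ∑ i ∈ Sᶜ, F (insert i S) ^ 2)) := by
    apply Finset.sum_le_sum
    intro S hS
    simp only [Finset.mem_filter, Finset.mem_univ, true_and] at hS
    exact key_termwise n p hp0 hp1 F S hS
  have step2 : ∑ S ∈ Finset.univ.filter (fun S : Finset (Fin n) => S ≠ ∅),
      (2 * (1 - 2 * p) ^ 2 * (S.card : ℝ) * F S ^ 2 +
        8 * (p * (1 - p)) * ((((n : ℝ) - S.card) / S.card) *
          ∑ i ∈ Sᶜ, F (insert i S) ^ 2))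
      = 2 * (1 - 2 * p) ^ 2 * (∑ S ∈ Finset.univ.filter (fun S : Finset (Fin n) => S ≠ ∅),
          (S.card : ℝ) * F S ^ 2) +
        8 * (p * (1 - p)) * ∑ S ∈ Finset.univ.filter (fun S : Finset (Fin n) => S ≠ ∅),
          ((((n : ℝ) - S.card) / S.card) * ∑ i ∈ Sᶜ, F (insert i S) ^ 2) := by
    rw [Finset.sum_add_distrib]
    congr 1
    · rw [Finset.mul_sum]
      apply Finset.sum_congr rfl
      intros; ring
    · rw [Finset.mul_sum]
  have step3 : ∑ S ∈ Finset.univ.filter (fun S : Finset (Fin n) => S ≠ ∅),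
      ((((n : ℝ) - S.card) / S.card) * ∑ i ∈ Sᶜ, F (insert i S) ^ 2)
      ≤ 2 * n * ∑ S ∈ Finset.univ.filter (fun S : Finset (Fin n) => S ≠ ∅), F S ^ 2 := by
    rw [key_reindex n F]
    exact key_Tbound n F
  have step4 : 8 * (p * (1 - p)) *
      (∑ S ∈ Finset.univ.filter (fun S : Finset (Fin n) => S ≠ ∅),
        ((((n : ℝ) - S.card) / S.card) * ∑ i ∈ Sᶜ, F (insert i S) ^ 2))
      ≤ 8 * (p * (1 - p)) *
        (2 * n * ∑ S ∈ Finset.univ.filter (fun S : Finset (Fin n) => S ≠ ∅), F S ^ 2) :=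
    mul_le_mul_of_nonneg_left step3 (by positivity)
  have hfinal : 8 * (p * (1 - p)) *
      (2 * n * ∑ S ∈ Finset.univ.filter (fun S : Finset (Fin n) => S ≠ ∅), F S ^ 2)
      = 16 * p * (1 - p) * n *
        ∑ S ∈ Finset.univ.filter (fun S : Finset (Fin n) => S ≠ ∅), F S ^ 2 := by ring
  linarith [step1, step2.le, step2.ge, step4]
end
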